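/- Let X be an n × M real matrix with XᵀX invertible whose 0-th column is the all-ones vector, i.e. X e₀ = 𝟙, and define β̂(y) = (XᵀX)⁻¹ Xᵀ y. Let K ≥ 2, r : Fin n → Fin K, l̃ : Fin K → ℝ, r̃ i = l̃ (r i), and d_k i = 1 if r i ≤ k else 0. Then for every coefficient index m ≠ 0, the m-th coordinate satisfies β̂(r̃)_m = ∑_{k=0}^{K−2} (l̃ k − l̃ (k+1)) · β̂(d_k)_m. -/

import Mathlib

/-! Summation by parts gives `l̃ (r i) = l̃ (K-1) + ∑ₖ (l̃ k - l̃ (k+1)) d_k i`, and the constant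
vector is `X e₀`, which `β̂` maps back to `e₀`. Linearity of `β̂` then leaves only the
dichotomized terms in every coordinate `m ≠ 0`. -/

open Matrix

/-- The OLS coefficient map `β̂(y) = (XᵀX)⁻¹ Xᵀ y`. -/
noncomputable def olsCoef {n M : ℕ} (X : Matrix (Fin n) (Fin M) ℝ) (y : Fin n → ℝ) :
    Fin M → ℝ :=
  (Xᵀ * X)⁻¹ *ᵥ (Xᵀ *ᵥ y)

theorem Finset.sum_range_ite_le_sub_succ {G : Type*} [AddCommGroup G] (g : ℕ → G) {j N : ℕ}
    (hj : j ≤ N) :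
    ∑ k ∈ range N, (if j ≤ k then g k - g (k + 1) else 0) = g j - g N := by
  have hfilter : (range N).filter (j ≤ ·) = Ico j N := by
    ext k
    simp only [mem_filter, mem_range, mem_Ico]
    tauto
  rw [← sum_filter, hfilter, ← neg_sub, ← sum_Ico_sub g hj, ← sum_neg_distrib]
  simp only [neg_sub]

theorem Fin.sum_sub_succ_mul_ite_le {R : Type*} [Ring R] {K : ℕ} (l : Fin K → R) (j : Fin K) :
    ∑ k : Fin (K - 1),
        (l (Fin.castLE (Nat.sub_le K 1) k) - l (Fin.cast (Nat.sub_add_cancel j.pos) k.succ)) *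
          (if (j : ℕ) ≤ k then 1 else 0) =
      l j - l ⟨K - 1, Nat.sub_one_lt_of_lt j.isLt⟩ := by
  set g : ℕ → R := fun t => l ⟨min t (K - 1), by have := j.isLt; omega⟩
  have hterm (k : Fin (K - 1)) :
      (l (Fin.castLE (Nat.sub_le K 1) k) - l (Fin.cast (Nat.sub_add_cancel j.pos) k.succ)) *
          (if (j : ℕ) ≤ k then 1 else 0) =
        if (j : ℕ) ≤ k then g k - g (k + 1) else 0 := by
    have hcast : l (Fin.castLE (Nat.sub_le K 1) k) = g k :=
      congrArg l (Fin.ext (by simp))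
    have hsucc : l (Fin.cast (Nat.sub_add_cancel j.pos) k.succ) = g (k + 1) :=
      congrArg l (Fin.ext (by simp))
    split_ifs <;> simp [hcast, hsucc]
  have hj : g j = l j := congrArg l (Fin.ext (by simp; omega))
  have hlast : g (K - 1) = l ⟨K - 1, Nat.sub_one_lt_of_lt j.isLt⟩ := congrArg l (Fin.ext (by simp))
  rw [Finset.sum_congr rfl fun k _ => hterm k,
    Fin.sum_univ_eq_sum_range (fun k => if (j : ℕ) ≤ k then g k - g (k + 1) else 0),
    Finset.sum_range_ite_le_sub_succ g (by omega), hj, hlast]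

section OLS

variable {n M : ℕ} (X : Matrix (Fin n) (Fin M) ℝ)

theorem olsCoef_eq_mulVec (y : Fin n → ℝ) : olsCoef X y = ((Xᵀ * X)⁻¹ * Xᵀ) *ᵥ y := by
  rw [olsCoef, mulVec_mulVec]

theorem olsCoef_add (y z : Fin n → ℝ) : olsCoef X (y + z) = olsCoef X y + olsCoef X z := by
  simp only [olsCoef_eq_mulVec, mulVec_add]

theorem olsCoef_smul (c : ℝ) (y : Fin n → ℝ) : olsCoef X (c • y) = c • olsCoef X y := by
  simp only [olsCoef_eq_mulVec, mulVec_smul]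

theorem olsCoef_sum {ι : Type*} (s : Finset ι) (y : ι → Fin n → ℝ) :
    olsCoef X (∑ k ∈ s, y k) = ∑ k ∈ s, olsCoef X (y k) := by
  simp only [olsCoef_eq_mulVec, mulVec_sum]

theorem olsCoef_mulVec (hX : IsUnit (Xᵀ * X)) (b : Fin M → ℝ) : olsCoef X (X *ᵥ b) = b := by
  rw [olsCoef_eq_mulVec, mulVec_mulVec, Matrix.mul_assoc,
    nonsing_inv_mul _ ((isUnit_iff_isUnit_det _).mp hX), one_mulVec]

end OLS

/-- If the design matrix contains a constant regressor (its 0-th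
column is the all-ones vector, i.e. `X e₀ = 𝟙`), then for every coefficient index
`m ≠ 0` the OLS coefficient of the transformed outcome is a weighted sum of the
dichotomized OLS coefficients, with no constant term. -/
theorem stmt_2 (n M K : ℕ) [NeZero M] (hK : 2 ≤ K)
    (X : Matrix (Fin n) (Fin M) ℝ) (hX : IsUnit (Xᵀ * X))
    (hcol : X *ᵥ Pi.single (0 : Fin M) 1 = fun _ => (1 : ℝ))
    (r : Fin n → Fin K) (l : Fin K → ℝ) :
    ∀ m : Fin M, m ≠ 0 →
      olsCoef X (fun i => l (r i)) m =
        ∑ k : Fin (K - 1),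
          (l (Fin.castLE (by omega) k) - l (Fin.cast (by omega) k.succ)) *
            olsCoef X (fun i => if (r i : ℕ) ≤ (k : ℕ) then (1 : ℝ) else 0) m := by
  intro m hm
  have hdecomp : (fun i => l (r i)) =
      ∑ k : Fin (K - 1), (l (Fin.castLE (by omega) k) - l (Fin.cast (by omega) k.succ)) •
          (fun i => if (r i : ℕ) ≤ (k : ℕ) then (1 : ℝ) else 0) +
        l ⟨K - 1, by omega⟩ • X *ᵥ Pi.single 0 1 := by
    funext i
    simp only [Pi.add_apply, Finset.sum_apply, Pi.smul_apply, smul_eq_mul, hcol, mul_one,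
      Fin.sum_sub_succ_mul_ite_le l (r i)]
    ring
  rw [hdecomp, olsCoef_add, olsCoef_sum]
  simp only [olsCoef_smul, olsCoef_mulVec X hX, Pi.add_apply, Finset.sum_apply, Pi.smul_apply,
    smul_eq_mul, Pi.single_eq_of_ne hm, mul_zero, add_zero]
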